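/- For every s ∈ ℂ with Re(s) > 1: 𝒞(1,8;s) = 128·𝒞(8,1;s) − 224·𝒞(4,1;s) + 49·𝒞(0,1;s); that is, Σ' cos(8θ_{p₁,p₂})/(p₁²+p₂²)^s = 128·Σ' cos⁸(θ_{p₁,p₂})/(p₁²+p₂²)^s − 224·Σ' cos⁴(θ_{p₁,p₂})/(p₁²+p₂²)^s + 49·Σ' 1/(p₁²+p₂²)^s. -/

import Mathlib

/-- The angle `θ_{p₁,p₂} = arg(p₁ + i p₂)` of a lattice point. -/
noncomputable def latticeAngle (p : ℤ × ℤ) : ℝ :=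
  Complex.arg ((p.1 : ℂ) + (p.2 : ℂ) * Complex.I)

/-- The angular lattice sum `𝒞(n,m;s)`. -/
noncomputable def latC (n m : ℕ) (s : ℂ) : ℂ :=
  ∑' p : {p : ℤ × ℤ // p ≠ 0},
    ((Real.cos ((m : ℝ) * latticeAngle p.1) : ℂ)) ^ n /
      (((p.1.1 : ℂ)) ^ 2 + ((p.1.2 : ℂ)) ^ 2) ^ s

/-- The angular lattice sum `𝒮(n,m;s)`. -/
noncomputable def latS (n m : ℕ) (s : ℂ) : ℂ :=
  ∑' p : {p : ℤ × ℤ // p ≠ 0},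
    ((Real.sin ((m : ℝ) * latticeAngle p.1) : ℂ)) ^ n /
      (((p.1.1 : ℂ)) ^ 2 + ((p.1.2 : ℂ)) ^ 2) ^ s

/-!
Writing `cos 8θ` as a polynomial in `cos θ`, the difference of the two sides is the lattice sum
of `h(θ) = cos 8θ - 128 cos⁸θ + 224 cos⁴θ - 49`. Swapping the coordinates of `p` preserves the
weight `(p₁² + p₂²)^(-s)` and exchanges `cos θ` with `sin θ`, and `h` is antisymmetric under
that exchange because `cos²θ + sin²θ = 1`. So the sum equals its own negative.
-/

open Real

lemma sq_add_sq_pos_of_ne_zero {p : ℤ × ℤ} (hp : p ≠ 0) :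
    0 < (p.1 : ℝ) ^ 2 + (p.2 : ℝ) ^ 2 := by
  obtain ⟨a, b⟩ := p
  have : a ≠ 0 ∨ b ≠ 0 := by contrapose! hp; simp [hp]
  rcases this with h | h <;> positivity

lemma summable_sq_add_sq_rpow_neg {σ : ℝ} (hσ : 1 < σ) :
    Summable fun p : {p : ℤ × ℤ // p ≠ 0} => ((p.1.1 : ℝ) ^ 2 + (p.1.2 : ℝ) ^ 2) ^ (-σ) := by
  have h := (EisensteinSeries.summable_one_div_norm_rpow (k := 2 * σ) (by linarith)).comp_injective
    ((finTwoArrowEquiv ℤ).symm.injective.comp (Subtype.val_injective (p := (· ≠ (0 : ℤ × ℤ)))))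
  refine h.of_nonneg_of_le (fun _ => by positivity) fun ⟨⟨a, b⟩, hp⟩ => ?_
  set x := (finTwoArrowEquiv ℤ).symm (a, b)
  have hx : 0 < ‖x‖ :=
    norm_pos_iff.mpr fun h => hp (by simpa [x] using congrArg (finTwoArrowEquiv ℤ) h)
  have hnorm : ‖x‖ = max |(a : ℝ)| |(b : ℝ)| := by simp [x, EisensteinSeries.norm_eq_max_natAbs]
  have hle : ‖x‖ ^ 2 ≤ (a : ℝ) ^ 2 + (b : ℝ) ^ 2 := by
    rw [hnorm]
    rcases max_cases |(a : ℝ)| |(b : ℝ)| with ⟨h, _⟩ | ⟨h, _⟩ <;> rw [h, sq_abs] <;> nlinarith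
  calc ((a : ℝ) ^ 2 + (b : ℝ) ^ 2) ^ (-σ) ≤ (‖x‖ ^ 2) ^ (-σ) :=
        rpow_le_rpow_of_nonpos (by positivity) hle (by linarith)
    _ = ‖x‖ ^ (-(2 * σ)) := by rw [← rpow_natCast, ← rpow_mul hx.le]; ring_nf

lemma summable_div_sq_add_sq_cpow {s : ℂ} (hs : 1 < s.re) {f : ℤ × ℤ → ℂ} {C : ℝ}
    (hf : ∀ p, ‖f p‖ ≤ C) :
    Summable fun p : {p : ℤ × ℤ // p ≠ 0} => f p / ((p.1.1 : ℂ) ^ 2 + (p.1.2 : ℂ) ^ 2) ^ s := by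
  refine ((summable_sq_add_sq_rpow_neg hs).mul_left C).of_norm_bounded fun p => ?_
  have hpos := sq_add_sq_pos_of_ne_zero p.2
  have hcast : (p.1.1 : ℂ) ^ 2 + (p.1.2 : ℂ) ^ 2 =
      (((p.1.1 : ℝ) ^ 2 + (p.1.2 : ℝ) ^ 2 : ℝ) : ℂ) := by
    push_cast; rfl
  rw [norm_div, hcast, Complex.norm_cpow_eq_rpow_re_of_pos hpos, rpow_neg hpos.le, div_eq_mul_inv]
  exact mul_le_mul_of_nonneg_right (hf p) (by positivity)

lemma tsum_eq_zero_of_comp_eq_neg {E β : Type*} [AddCommGroup E] [TopologicalSpace E]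
    [IsTopologicalAddGroup E] [T2Space E] [IsAddTorsionFree E] (e : β ≃ β) {f : β → E}
    (hf : ∀ b, f (e b) = -f b) : ∑' b, f b = 0 :=
  self_eq_neg.mp <| calc
    ∑' b, f b = ∑' b, f (e b) := (e.tsum_eq f).symm
    _ = -∑' b, f b := by rw [← tsum_neg]; exact tsum_congr hf

lemma tsum_div_sq_add_sq_cpow_eq_zero_of_swap (s : ℂ) {f : ℤ × ℤ → ℂ}
    (hf : ∀ p ≠ 0, f p.swap = -f p) :
    ∑' p : {p : ℤ × ℤ // p ≠ 0}, f p / ((p.1.1 : ℂ) ^ 2 + (p.1.2 : ℂ) ^ 2) ^ s = 0 := by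
  let swap : {p : ℤ × ℤ // p ≠ 0} ≃ {p : ℤ × ℤ // p ≠ 0} :=
    (Equiv.prodComm ℤ ℤ).subtypeEquiv fun p => by simp [Prod.ext_iff, and_comm]
  refine tsum_eq_zero_of_comp_eq_neg swap fun p => ?_
  change f p.1.swap / ((p.1.2 : ℂ) ^ 2 + (p.1.1 : ℂ) ^ 2) ^ s = _
  rw [hf p.1 p.2, add_comm, neg_div]

lemma cos_latticeAngle_swap {p : ℤ × ℤ} (hp : p ≠ 0) :
    cos (latticeAngle p.swap) = sin (latticeAngle p) := by
  have hne : (p.2 : ℂ) + (p.1 : ℂ) * Complex.I ≠ 0 := by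
    simpa [Complex.ext_iff, Prod.ext_iff, and_comm] using hp
  have hnorm : ‖(p.2 : ℂ) + (p.1 : ℂ) * Complex.I‖ = ‖(p.1 : ℂ) + (p.2 : ℂ) * Complex.I‖ := by
    simp [Complex.norm_def, Complex.normSq_apply, add_comm]
  simp only [latticeAngle, Prod.fst_swap, Prod.snd_swap]
  rw [Complex.cos_arg hne, Complex.sin_arg, hnorm]
  simp

lemma cos_eight_mul (θ : ℝ) :
    cos (8 * θ) = 128 * cos θ ^ 8 - 256 * cos θ ^ 6 + 160 * cos θ ^ 4 - 32 * cos θ ^ 2 + 1 := by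
  rw [show 8 * θ = 2 * (2 * (2 * θ)) by ring, cos_two_mul, cos_two_mul, cos_two_mul]
  ring

lemma cos_eight_mul_sub_add_sub_of_cos_eq_sin {φ θ : ℝ} (h : cos φ = sin θ) :
    cos (8 * φ) - 128 * cos φ ^ 8 + 224 * cos φ ^ 4 - 49 =
      -(cos (8 * θ) - 128 * cos θ ^ 8 + 224 * cos θ ^ 4 - 49) := by
  rw [cos_eight_mul, cos_eight_mul, h]
  linear_combination (-256 * (sin θ ^ 2 + cos θ ^ 2) ^ 2 + 128 * (sin θ ^ 2 + cos θ ^ 2) + 96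
    + 768 * sin θ ^ 2 * cos θ ^ 2) * sin_sq_add_cos_sq θ

/-- For `Re s > 1`, `𝒞(1,8;s) = 128 𝒞(8,1;s) - 224 𝒞(4,1;s) + 49 𝒞(0,1;s)`. -/
theorem latC_one_eight_eq (s : ℂ) (hs : 1 < s.re) :
    latC 1 8 s = 128 * latC 8 1 s - 224 * latC 4 1 s + 49 * latC 0 1 s := by
  have hasSum_latC (n m : ℕ) : HasSum (fun p : {p : ℤ × ℤ // p ≠ 0} =>
      (cos (m * latticeAngle p.1) : ℂ) ^ n / ((p.1.1 : ℂ) ^ 2 + (p.1.2 : ℂ) ^ 2) ^ s)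
      (latC n m s) := by
    have hbound (p : ℤ × ℤ) : ‖(cos (m * latticeAngle p) : ℂ) ^ n‖ ≤ 1 := by
      rw [norm_pow, Complex.norm_real, norm_eq_abs]
      exact pow_le_one₀ (abs_nonneg _) (abs_cos_le_one _)
    exact (summable_div_sq_add_sq_cpow hs hbound).hasSum
  have hcomb := (hasSum_latC 1 8).sub ((((hasSum_latC 8 1).mul_left 128).sub
    ((hasSum_latC 4 1).mul_left 224)).add ((hasSum_latC 0 1).mul_left 49))
  have hzero := tsum_div_sq_add_sq_cpow_eq_zero_of_swap s
    (f := fun p => ((cos (8 * latticeAngle p) - 128 * cos (latticeAngle p) ^ 8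
      + 224 * cos (latticeAngle p) ^ 4 - 49 : ℝ) : ℂ)) fun p hp => by
    simp only [cos_eight_mul_sub_add_sub_of_cos_eq_sin (cos_latticeAngle_swap hp),
      Complex.ofReal_neg]
  rw [← sub_eq_zero, ← hcomb.tsum_eq, ← hzero]
  congr 1 with p
  simp only [Nat.cast_one, one_mul, Nat.cast_ofNat]
  push_cast
  ring
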